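/- Let p ≥ 1 and let P be a closed polygon in ℝ² whose vertices have a bounding box of side lengths d_x in the x-direction and d_y in the y-direction. Then the perimeter of P, with edge lengths measured in the p-norm, is at least 2 · (d_x^p + d_y^p)^{1/p}. -/

import Mathlib

open Classical

/-- The `p`-norm distance between two points of `ℝ²`. -/
noncomputable def pdist (p : ℝ) (a b : ℝ × ℝ) : ℝ :=
  (|a.1 - b.1| ^ p + |a.2 - b.2| ^ p) ^ (1 / p)

/-- The perimeter of the closed polygon (cyclic sequence of vertices) given by
the list `L`: the sum of the `p`-norm distances between cyclically consecutive
vertices. -/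
noncomputable def cycleLength (p : ℝ) (L : List (ℝ × ℝ)) : ℝ :=
  ((L.zip (L.rotate 1)).map fun e => pdist p e.1 e.2).sum

/-!
Along the closed walk of the vertices, the `x`-coordinate goes from `xmin` to `xmax` and back, so
its total variation `∑ |Δx|` is at least `2 d_x`; likewise `∑ |Δy| ≥ 2 d_y`. The perimeter is
`∑ ‖(|Δx|, |Δy|)‖_p`, which by the triangle inequality in `ℓ^p(ℝ²)` is at least
`‖(∑ |Δx|, ∑ |Δy|)‖_p`, and the `ℓ^p` norm is monotone in the absolute values of the coordinates.
-/

open Finset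
open scoped ENNReal

theorem two_mul_dist_le_sum_range_dist {α : Type*} [PseudoMetricSpace α] {g : ℕ → α} {n i j : ℕ}
    (hg : g n = g 0) (hi : i ≤ n) (hj : j ≤ n) :
    2 * dist (g i) (g j) ≤ ∑ k ∈ range n, dist (g k) (g (k + 1)) := by
  wlog hij : i ≤ j generalizing i j
  · rw [dist_comm]; exact this hj hi (le_of_not_ge hij)
  have h₀ := dist_le_Ico_sum_dist g (Nat.zero_le i)
  have h₁ := dist_le_Ico_sum_dist g hij
  have h₂ := dist_le_Ico_sum_dist g hj
  rw [hg] at h₂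
  rw [range_eq_Ico, ← sum_Ico_consecutive _ (Nat.zero_le i) (hij.trans hj),
    ← sum_Ico_consecutive _ hij hj]
  linarith [dist_triangle (g j) (g 0) (g i), dist_comm (g i) (g j)]

theorem List.sum_zipWith_rotate_one {α M : Type*} [AddCommMonoid M] (f : α → α → M) (L : List α)
    (d : α) : (L.zipWith f (L.rotate 1)).sum =
      ∑ k ∈ Finset.range L.length, f (L.getD (k % L.length) d) (L.getD ((k + 1) % L.length) d) := by
  rw [← Fin.sum_univ_eq_sum_range, ← List.sum_ofFn]
  congr 1
  refine List.ext_getElem (by simp) fun k _ hk ↦ ?_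
  rw [List.length_ofFn] at hk
  simp [List.getElem_rotate, Nat.mod_eq_of_lt hk, Nat.mod_lt _ (k.zero_le.trans_lt hk)]

theorem List.exists_getD_mod_eq_of_mem {α : Type*} {L : List α} {a : α} (d : α) (ha : a ∈ L) :
    ∃ i < L.length, L.getD (i % L.length) d = a := by
  obtain ⟨i, hi, rfl⟩ := List.mem_iff_getElem.1 ha
  exact ⟨i, hi, by simp [Nat.mod_eq_of_lt hi, hi]⟩

theorem WithLp.prod_norm_le_prod_norm {q : ℝ≥0∞} {α β : Type*} [SeminormedAddCommGroup α]
    [SeminormedAddCommGroup β] (hq : 0 < q.toReal) {f g : WithLp q (α × β)}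
    (h₁ : ‖f.fst‖ ≤ ‖g.fst‖) (h₂ : ‖f.snd‖ ≤ ‖g.snd‖) : ‖f‖ ≤ ‖g‖ := by
  rw [prod_norm_eq_add hq, prod_norm_eq_add hq]
  gcongr

theorem pdist_eq_norm_toLp {p : ℝ} (hp : 0 < p) (a b : ℝ × ℝ) :
    pdist p a b = ‖WithLp.toLp (ENNReal.ofReal p) (|a.1 - b.1|, |a.2 - b.2|)‖ := by
  rw [WithLp.prod_norm_eq_add (by simpa [hp.le]), ENNReal.toReal_ofReal hp.le]
  simp [pdist]

theorem cycleLength_eq_sum_range (p : ℝ) (L : List (ℝ × ℝ)) :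
    cycleLength p L = ∑ k ∈ range L.length,
      pdist p (L.getD (k % L.length) 0) (L.getD ((k + 1) % L.length) 0) :=
  (congrArg List.sum (List.map_uncurry_zip_eq_zipWith (f := pdist p))).trans
    (List.sum_zipWith_rotate_one _ _ _)

theorem two_mul_pdist_le_cycleLength {p : ℝ} (hp : 1 ≤ p) {L : List (ℝ × ℝ)} {a b c d : ℝ × ℝ}
    (ha : a ∈ L) (hb : b ∈ L) (hc : c ∈ L) (hd : d ∈ L) :
    2 * pdist p (a.1, c.2) (b.1, d.2) ≤ cycleLength p L := by
  have hp₀ : 0 < p := one_pos.trans_le hp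
  have : Fact (1 ≤ ENNReal.ofReal p) := ⟨by simpa using ENNReal.ofReal_le_ofReal hp⟩
  set n := L.length
  set v : ℕ → ℝ × ℝ := fun k ↦ L.getD (k % n) 0
  set Δ : ℕ → ℝ × ℝ := fun k ↦ (|(v k).1 - (v (k + 1)).1|, |(v k).2 - (v (k + 1)).2|)
  have hv : v n = v 0 := by simp [v, n]
  have two_mul_le_variation (π : ℝ × ℝ → ℝ) {x y : ℝ × ℝ} (hx : x ∈ L) (hy : y ∈ L) :
      2 * |π x - π y| ≤ ∑ k ∈ range n, |π (v k) - π (v (k + 1))| := by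
    obtain ⟨i, hi, rfl⟩ := L.exists_getD_mod_eq_of_mem 0 hx
    obtain ⟨j, hj, rfl⟩ := L.exists_getD_mod_eq_of_mem 0 hy
    simpa only [Real.dist_eq] using
      two_mul_dist_le_sum_range_dist (g := fun k ↦ π (v k)) (congrArg π hv) hi.le hj.le
  calc 2 * pdist p (a.1, c.2) (b.1, d.2)
      = ‖WithLp.toLp (ENNReal.ofReal p) (2 * |a.1 - b.1|, 2 * |c.2 - d.2|)‖ := by
        rw [pdist_eq_norm_toLp hp₀, ← abs_two, ← Real.norm_eq_abs, ← norm_smul, ← WithLp.toLp_smul]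
        simp
    _ ≤ ‖WithLp.toLp (ENNReal.ofReal p) (∑ k ∈ range n, Δ k)‖ := by
        refine WithLp.prod_norm_le_prod_norm (by simpa [hp₀.le]) ?_ ?_ <;>
          simp only [Δ, WithLp.toLp_fst, WithLp.toLp_snd, Prod.fst_sum, Prod.snd_sum, Real.norm_eq_abs,
            abs_mul, abs_two, abs_abs, abs_sum_of_nonneg' fun _ ↦ abs_nonneg _]
        exacts [two_mul_le_variation Prod.fst ha hb, two_mul_le_variation Prod.snd hc hd]
    _ ≤ ∑ k ∈ range n, ‖WithLp.toLp (ENNReal.ofReal p) (Δ k)‖ := by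
        rw [WithLp.toLp_sum]
        exact norm_sum_le _ _
    _ = cycleLength p L := by
        simp only [cycleLength_eq_sum_range, pdist_eq_norm_toLp hp₀]
        rfl

theorem polygon_perimeter_bounding_box (p : ℝ) (hp : 1 ≤ p)
    (L : List (ℝ × ℝ)) (xmin xmax ymin ymax : ℝ)
    (hxlo : ∀ v ∈ L, xmin ≤ v.1)
    (hylo : ∀ v ∈ L, ymin ≤ v.2)
    (hxlo' : ∃ v ∈ L, v.1 = xmin) (hxhi' : ∃ v ∈ L, v.1 = xmax)
    (hylo' : ∃ v ∈ L, v.2 = ymin) (hyhi' : ∃ v ∈ L, v.2 = ymax) :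
    2 * ((xmax - xmin) ^ p + (ymax - ymin) ^ p) ^ (1 / p) ≤ cycleLength p L := by
  obtain ⟨a, ha, rfl⟩ := hxlo'
  obtain ⟨b, hb, rfl⟩ := hxhi'
  obtain ⟨c, hc, rfl⟩ := hylo'
  obtain ⟨d, hd, rfl⟩ := hyhi'
  have h := two_mul_pdist_le_cycleLength hp hb ha hd hc
  rwa [pdist, abs_of_nonneg (sub_nonneg.2 (hxlo b hb)), abs_of_nonneg (sub_nonneg.2 (hylo d hd))]
    at h
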